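/- arXiv:1709.02829 — 6 statements merged into one kernel-verified Lean document; each statement's English description precedes it below -/
import Mathlib

section
/- In the bipartite graph G whose parts are the a-element subsets and the (a-1)-element subsets of an m-element set Y (with m ≥ 2a-1), and whose edges join disjoint sets, every independent set I satisfies |I ∩ {a-sets}|/C(m,a) + |I ∩ {(a-1)-sets}|/C(m,a-1) ≤ 1. -/
/-!
The graph is biregular: an `a`-set `S ⊆ Y` is disjoint from `C(m-a, a-1)` of the `(a-1)`-sets and
an `(a-1)`-set from `C(m-a+1, a)` of the `a`-sets. In a biregular bipartite graph with parts `A`, `B`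
and degrees `dA`, `dB`, the neighbours of the `A`-side of an independent set `I` all lie in `B \ I`,
so double counting gives `|I ∩ A| dA ≤ |B \ I| dB`. Dividing by the number of edges
`|A| dA = |B| dB` yields `|I ∩ A| / |A| + |I ∩ B| / |B| ≤ 1`.
-/

open Finset

namespace Finset

section Biregular

variable {α β : Type*} (r : α → β → Prop) [∀ a b, Decidable (r a b)]
  {A IA : Finset α} {B IB : Finset β} {dA dB : ℕ}

theorem card_mul_add_card_mul_le_card_mul (hIA : IA ⊆ A) (hIB : IB ⊆ B)
    (hno : ∀ S ∈ IA, ∀ T ∈ IB, ¬ r S T)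
    (hA : ∀ S ∈ A, dA ≤ #(B.bipartiteAbove r S))
    (hB : ∀ T ∈ B, #(A.bipartiteBelow r T) ≤ dB) :
    #IA * dA + #IB * dB ≤ #B * dB := by
  classical
  have hout : #IA * dA ≤ #(B \ IB) * dB := by
    refine card_mul_le_card_mul r (fun S hS => ?_) (fun T hT => ?_)
    · have hnbhd : (B \ IB).bipartiteAbove r S = B.bipartiteAbove r S := by
        refine (filter_subset_filter _ sdiff_subset).antisymm fun T hT => ?_
        obtain ⟨hTB, hST⟩ := mem_filter.1 hT
        exact mem_filter.2 ⟨mem_sdiff.2 ⟨hTB, fun hTI => hno S hS T hTI hST⟩, hST⟩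
      rw [hnbhd]
      exact hA S (hIA hS)
    · exact (card_le_card (filter_subset_filter _ hIA)).trans (hB T (mem_sdiff.1 hT).1)
  rw [card_sdiff_of_subset hIB] at hout
  have hIBB : #IB ≤ #B := card_le_card hIB
  calc #IA * dA + #IB * dB ≤ (#B - #IB) * dB + #IB * dB := by gcongr
    _ = #B * dB := by rw [← add_mul, Nat.sub_add_cancel hIBB]

theorem card_div_card_add_card_div_card_le_one (hIA : IA ⊆ A) (hIB : IB ⊆ B)
    (hno : ∀ S ∈ IA, ∀ T ∈ IB, ¬ r S T)
    (hA : ∀ S ∈ A, #(B.bipartiteAbove r S) = dA)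
    (hB : ∀ T ∈ B, #(A.bipartiteBelow r T) = dB)
    (hdA : 0 < dA) (hAne : A.Nonempty) :
    (#IA : ℝ) / #A + (#IB : ℝ) / #B ≤ 1 := by
  have hedges : (#A : ℝ) * dA = #B * dB := by exact_mod_cast card_mul_eq_card_mul r hA hB
  have hdA0 : (dA : ℝ) ≠ 0 := by exact_mod_cast hdA.ne'
  have hdB0 : (dB : ℝ) ≠ 0 := by
    intro h
    simp [h, hAne.card_pos.ne', hdA0] at hedges
  have hcount := card_mul_add_card_mul_le_card_mul r hIA hIB hno (fun S hS => (hA S hS).ge)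
    (fun T hT => (hB T hT).le)
  calc (#IA : ℝ) / #A + (#IB : ℝ) / #B = (#IA * dA + #IB * dB) / (#A * dA) := by
        rw [add_div, mul_div_mul_right _ _ hdA0, hedges, mul_div_mul_right _ _ hdB0]
    _ ≤ 1 := div_le_one_of_le₀ (by rw [hedges]; exact_mod_cast hcount) (by positivity)

end Biregular

variable {α : Type*} [DecidableEq α] {S T Y : Finset α}

theorem card_bipartiteAbove_disjoint_powersetCard (hS : S ⊆ Y) (k : ℕ) :
    #((Y.powersetCard k).bipartiteAbove Disjoint S) = (#Y - #S).choose k := by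
  have hnbhd : (Y.powersetCard k).bipartiteAbove Disjoint S = (Y \ S).powersetCard k := by
    ext T
    simp only [bipartiteAbove, mem_filter, mem_powersetCard, subset_sdiff, disjoint_comm]
    tauto
  rw [hnbhd, card_powersetCard, card_sdiff_of_subset hS]

theorem card_bipartiteBelow_disjoint_powersetCard (hT : T ⊆ Y) (k : ℕ) :
    #((Y.powersetCard k).bipartiteBelow Disjoint T) = (#Y - #T).choose k := by
  simp_rw [bipartiteBelow, disjoint_comm (b := T)]
  exact card_bipartiteAbove_disjoint_powersetCard hT k

end Finset

theorem independent_set_bound_general (a m : ℕ) (hm : 2 * a - 1 ≤ m)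
    (Y : Finset ℕ) (hY : Y.card = m)
    (I : Finset (Finset ℕ))
    (hind : ∀ S ∈ I, ∀ T ∈ I, S.card = a → T.card = a - 1 → ¬ Disjoint S T) :
    ((I ∩ Y.powersetCard a).card : ℝ) / (m.choose a : ℝ) +
      ((I ∩ Y.powersetCard (a - 1)).card : ℝ) / (m.choose (a - 1) : ℝ) ≤ 1 := by
  have hA : ∀ S ∈ Y.powersetCard a,
      #((Y.powersetCard (a - 1)).bipartiteAbove Disjoint S) = (m - a).choose (a - 1) := by
    intro S hS
    obtain ⟨hSY, rfl⟩ := mem_powersetCard.1 hS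
    rw [card_bipartiteAbove_disjoint_powersetCard hSY, hY]
  have hB : ∀ T ∈ Y.powersetCard (a - 1),
      #((Y.powersetCard a).bipartiteBelow Disjoint T) = (m - (a - 1)).choose a := by
    intro T hT
    obtain ⟨hTY, hTcard⟩ := mem_powersetCard.1 hT
    rw [card_bipartiteBelow_disjoint_powersetCard hTY, hY, hTcard]
  have hno : ∀ S ∈ I ∩ Y.powersetCard a, ∀ T ∈ I ∩ Y.powersetCard (a - 1), ¬ Disjoint S T :=
    fun S hS T hT => hind S (mem_inter.1 hS).1 T (mem_inter.1 hT).1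
      (mem_powersetCard.1 (mem_inter.1 hS).2).2 (mem_powersetCard.1 (mem_inter.1 hT).2).2
  have hbound := card_div_card_add_card_div_card_le_one Disjoint inter_subset_right
    inter_subset_right hno hA hB (Nat.choose_pos (by omega)) (powersetCard_nonempty.2 (by omega))
  simpa only [card_powersetCard, hY] using hbound

/-- In the bipartite disjointness graph between `a`-subsets and `(a-1)`-subsets of a
set `Y` of size `m ≥ 2a-1`, every independent set `I` satisfies
`|I ∩ {a-sets}|/C(m,a) + |I ∩ {(a-1)-sets}|/C(m,a-1) ≤ 1`. -/
theorem independent_set_bound (a m : ℕ) (ha : 1 ≤ a) (hm : 2 * a - 1 ≤ m)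
    (Y : Finset ℕ) (hY : Y.card = m)
    (I : Finset (Finset ℕ))
    (hI : I ⊆ Y.powersetCard a ∪ Y.powersetCard (a - 1))
    (hind : ∀ S ∈ I, ∀ T ∈ I, S.card = a → T.card = a - 1 → ¬ Disjoint S T) :
    ((I ∩ Y.powersetCard a).card : ℝ) / (m.choose a : ℝ) +
      ((I ∩ Y.powersetCard (a - 1)).card : ℝ) / (m.choose (a - 1) : ℝ) ≤ 1 :=
  independent_set_bound_general a m hm Y hY I hind
end

section
/- For lex-initial cross-intersecting families: if B is the family of the |B| lexicographically largest b-element subsets of [m] and |B| ≤ C(m-(b-a+1), a-1) with b ≥ a, then every member of B contains the interval {1, 2, ..., b-a+1}. -/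
open Finset

/-- If `B` is a lex-initial family of `b`-subsets of `[m]` (closed under passing to
lexicographically larger sets, where `A` is lex-larger than `S` iff
`min (A \ S) < min (S \ A)`) with `|B| ≤ C(m-(b-a+1), a-1)` and `b ≥ a ≥ 1`,
then every member of `B` contains `{1, …, b-a+1}`. -/
theorem lex_initial_contains_interval (a b m : ℕ) (ha : 1 ≤ a) (hab : a ≤ b)
    (hm : b + 1 ≤ m)
    (B : Finset (Finset ℕ)) (hB : B ⊆ (Icc 1 m).powersetCard b)
    (hinit : ∀ S ∈ B, ∀ A ∈ (Icc 1 m).powersetCard b,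
      (A \ S).min < (S \ A).min → A ∈ B)
    (hsize : B.card ≤ (m - (b - a + 1)).choose (a - 1)) :
    ∀ S ∈ B, Icc 1 (b - a + 1) ⊆ S := by
  set k := b - a + 1 with hk
  intro S hS
  by_contra hcon
  -- j : least element of Icc 1 k not in S
  have hne : (Icc 1 k \ S).Nonempty := by
    rw [sdiff_nonempty]; exact hcon
  set j := (Icc 1 k \ S).min' hne with hj
  have hjmem : j ∈ Icc 1 k \ S := min'_mem _ _
  have hjI : j ∈ Icc 1 k := (mem_sdiff.1 hjmem).1
  have hjS : j ∉ S := (mem_sdiff.1 hjmem).2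
  have hjlow : ∀ x, x ∈ Icc 1 k → x < j → x ∈ S := by
    intro x hx hxj
    by_contra hxS
    exact absurd (min'_le _ x (mem_sdiff.2 ⟨hx, hxS⟩)) (not_le.2 hxj)
  have hSP := hB hS
  rw [mem_powersetCard] at hSP
  obtain ⟨hSsub, hScard⟩ := hSP
  have hkm : k + 1 ≤ m := by omega
  -- the family of all sets Icc 1 k ∪ T
  set F : Finset (Finset ℕ) :=
    ((Icc (k+1) m).powersetCard (a-1)).image (fun T => Icc 1 k ∪ T) with hF
  have hcardIcc : (Icc (k+1) m).card = m - k := by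
    rw [Nat.card_Icc]; omega
  have hdisj : ∀ T ∈ (Icc (k+1) m).powersetCard (a-1), Disjoint (Icc 1 k) T := by
    intro T hT
    rw [mem_powersetCard] at hT
    refine disjoint_left.2 fun x hx hxT => ?_
    have h1 := mem_Icc.1 hx
    have h2 := mem_Icc.1 (hT.1 hxT)
    omega
  have hFcard : F.card = (m - k).choose (a-1) := by
    rw [hF, card_image_of_injOn, card_powersetCard, hcardIcc]
    intro T hT T' hT' h
    have hT := mem_coe.1 hT
    have hT' := mem_coe.1 hT'
    have e1 : (Icc 1 k ∪ T) \ Icc 1 k = T := union_sdiff_cancel_left (hdisj T hT)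
    have e2 : (Icc 1 k ∪ T') \ Icc 1 k = T' := union_sdiff_cancel_left (hdisj T' hT')
    rw [← e1, ← e2]
    exact congrArg (· \ Icc 1 k) h
  have hFmemP : ∀ A ∈ F, A ∈ (Icc 1 m).powersetCard b := by
    intro A hA
    rw [hF, mem_image] at hA
    obtain ⟨T, hT, rfl⟩ := hA
    have hd := hdisj T hT
    rw [mem_powersetCard] at hT ⊢
    constructor
    · refine union_subset ?_ (hT.1.trans ?_)
      · intro x hx; have := mem_Icc.1 hx; exact mem_Icc.2 ⟨this.1, by omega⟩
      · intro x hx; have := mem_Icc.1 hx; exact mem_Icc.2 ⟨by omega, this.2⟩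
    · rw [card_union_of_disjoint hd, Nat.card_Icc, hT.2]; omega
  have hFB : F ⊆ B := by
    intro A hA
    have hAP := hFmemP A hA
    refine hinit S hS A hAP ?_
    have hjA : j ∈ A := by
      rw [hF, mem_image] at hA
      obtain ⟨T, hT, rfl⟩ := hA
      exact mem_union_left _ hjI
    have hAScard : A.card = S.card := by
      rw [hScard, (mem_powersetCard.1 hAP).2]
    have hSAne : (S \ A).Nonempty := by
      rw [sdiff_nonempty]
      intro hsub
      have : S = A := eq_of_subset_of_card_le hsub (le_of_eq hAScard)
      exact hjS (this ▸ hjA)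
    have h1 : (A \ S).min ≤ (j : WithTop ℕ) := min_le (mem_sdiff.2 ⟨hjA, hjS⟩)
    have h2 : (j : WithTop ℕ) < (S \ A).min := by
      rw [← coe_min' hSAne]
      have goal : j < (S \ A).min' hSAne := by
        have hi := min'_mem _ hSAne
        rw [mem_sdiff] at hi
        rcases lt_trichotomy ((S \ A).min' hSAne) j with h | h | h
        · exfalso
          refine hi.2 ?_
          rw [hF, mem_image] at hA
          obtain ⟨T, hT, rfl⟩ := hA
          refine mem_union_left _ ?_
          have hx1 := mem_Icc.1 (hSsub hi.1)
          have hjk := mem_Icc.1 hjI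
          exact mem_Icc.2 ⟨hx1.1, by omega⟩
        · exact absurd (h ▸ hi.1) hjS
        · exact h
      exact WithTop.coe_lt_coe.2 goal
    exact lt_of_le_of_lt h1 h2
  have hSF : S ∉ F := by
    intro hSf
    rw [hF, mem_image] at hSf
    obtain ⟨T, hT, hTe⟩ := hSf
    exact hcon (hTe ▸ subset_union_left)
  have : (insert S F).card ≤ B.card :=
    card_le_card (insert_subset hS hFB)
  rw [card_insert_of_notMem hSF, hFcard] at this
  omega
end

section
/- If F ⊆ {S ⊆ [n] : |S| = k} is a shifted intersecting family with n ≥ 2k, then the subfamily F' = {F ∈ F : 1 ∉ F} is 2-intersecting: any two members of F' intersect in at least 2 elements. -/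
open Finset

/-- For a shifted intersecting family `F` of `k`-subsets of `[n]` with `n ≥ 2k`,
the subfamily of sets avoiding `1` is 2-intersecting. -/
theorem shifted_avoiding_one_two_intersecting (n k : ℕ) (hn : 2 * k ≤ n)
    (F : Finset (Finset ℕ)) (hF : F ⊆ (Icc 1 n).powersetCard k)
    (hint : ∀ A ∈ F, ∀ B ∈ F, (A ∩ B).Nonempty)
    (hshift : ∀ i j : ℕ, 1 ≤ i → i < j → j ≤ n →
      ∀ A ∈ F, j ∈ A → i ∉ A → insert i (A.erase j) ∈ F) :
    ∀ A ∈ F, ∀ B ∈ F, 1 ∉ A → 1 ∉ B → 2 ≤ (A ∩ B).card := by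
  intro A hA B hB h1A h1B
  by_contra hlt
  push_neg at hlt
  obtain ⟨j, hj⟩ := hint A hA B hB
  have hcard : (A ∩ B).card = 1 := le_antisymm (by omega) (card_pos.mpr ⟨j, hj⟩)
  have hAB : A ∩ B = {j} := by
    rcases card_eq_one.mp hcard with ⟨x, hx⟩
    rw [hx] at hj ⊢
    simp_all
  have hjA : j ∈ A := (mem_inter.mp hj).1
  have hjB : j ∈ B := (mem_inter.mp hj).2
  have hAn : A ⊆ Icc 1 n := (mem_powersetCard.mp (hF hA)).1
  have hjn : j ≤ n := (mem_Icc.mp (hAn hjA)).2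
  have h1j : 1 < j := lt_of_le_of_ne (mem_Icc.mp (hAn hjA)).1
    (fun h => h1A (h ▸ hjA))
  have hA' := hshift 1 j le_rfl h1j hjn A hA hjA h1A
  obtain ⟨x, hx⟩ := hint _ hA' B hB
  rw [mem_inter, mem_insert, mem_erase] at hx
  rcases hx with ⟨h1 | ⟨hxj, hxA⟩, hxB⟩
  · exact h1B (h1 ▸ hxB)
  · have : x ∈ A ∩ B := mem_inter.mpr ⟨hxA, hxB⟩
    rw [hAB, mem_singleton] at this
    exact hxj this
end

section
/- For a shifted intersecting family F ⊆ {S ⊆ [n] : |S| = k} (n ≥ 2k > 0), the degree of element 1 equals the maximum degree: δ₁(F) = Δ(F). -/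
/-!
Shifting `j` down to `1` maps the members containing `j` but not `1` injectively to members
containing `1` but not `j`, so no element of `[n]` has larger degree than `1`.
-/

open Finset

variable {α : Type*} [DecidableEq α]

lemma card_filter_mem_le_card_filter_mem_of_shift {F : Finset (Finset α)} {a b : α}
    (hab : a ≠ b) (hshift : ∀ A ∈ F, b ∈ A → a ∉ A → insert a (A.erase b) ∈ F) :
    #{A ∈ F | b ∈ A} ≤ #{A ∈ F | a ∈ A} := by
  have hinj : #{A ∈ F | b ∈ A ∧ a ∉ A} ≤ #{A ∈ F | a ∈ A ∧ b ∉ A} := by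
    refine card_le_card_of_injOn (fun A => insert a (A.erase b)) ?_ ?_
    · intro A hA
      simp only [coe_filter, Set.mem_ofPred_eq] at hA ⊢
      exact ⟨hshift A hA.1 hA.2.1 hA.2.2, mem_insert_self a _, by simp [hab.symm]⟩
    · intro A hA B hB hAB
      simp only [coe_filter, Set.mem_ofPred_eq] at hA hB
      have hunshift (C : Finset α) (hbC : b ∈ C) (haC : a ∉ C) :
          insert b ((insert a (C.erase b)).erase a) = C := by
        rw [erase_insert fun h => haC (mem_of_mem_erase h), insert_erase hbC]
      rw [← hunshift A hA.2.1 hA.2.2, ← hunshift B hB.2.1 hB.2.2]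
      exact congrArg (fun C => insert b (C.erase a)) hAB
  have hsplit (x y : α) :
      #{A ∈ F | x ∈ A} = #{A ∈ F | x ∈ A ∧ y ∈ A} + #{A ∈ F | x ∈ A ∧ y ∉ A} := by
    rw [← filter_filter, ← filter_filter, card_filter_add_card_filter_not]
  have hboth : {A ∈ F | b ∈ A ∧ a ∈ A} = {A ∈ F | a ∈ A ∧ b ∈ A} := by
    simp only [and_comm]
  rw [hsplit b a, hsplit a b, hboth]
  omega

theorem shifted_max_degree_at_one_general (n k : ℕ) (hk : 0 < k) (hn : 2 * k ≤ n)
    (F : Finset (Finset ℕ))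
    (hshift : ∀ i j : ℕ, 1 ≤ i → i < j → j ≤ n →
      ∀ A ∈ F, j ∈ A → i ∉ A → insert i (A.erase j) ∈ F) :
    (F.filter (fun A => 1 ∈ A)).card =
      (Icc 1 n).sup (fun i => (F.filter (fun A => i ∈ A)).card) := by
  have hone : 1 ∈ Icc 1 n := mem_Icc.2 ⟨le_rfl, by omega⟩
  refine le_antisymm (le_sup (f := fun i => #{A ∈ F | i ∈ A}) hone)
    (Finset.sup_le fun j hj => ?_)
  obtain ⟨hj1, hjn⟩ := mem_Icc.1 hj
  obtain rfl | h1j := hj1.eq_or_lt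
  · rfl
  exact card_filter_mem_le_card_filter_mem_of_shift h1j.ne (hshift 1 j le_rfl h1j hjn)

/-- For a shifted intersecting family `F` of `k`-subsets of `[n]` with `n ≥ 2k > 0`,
the degree of element `1` equals the maximum degree. -/
theorem shifted_max_degree_at_one (n k : ℕ) (hk : 0 < k) (hn : 2 * k ≤ n)
    (F : Finset (Finset ℕ)) (hF : F ⊆ (Icc 1 n).powersetCard k)
    (hint : ∀ A ∈ F, ∀ B ∈ F, (A ∩ B).Nonempty)
    (hshift : ∀ i j : ℕ, 1 ≤ i → i < j → j ≤ n →
      ∀ A ∈ F, j ∈ A → i ∉ A → insert i (A.erase j) ∈ F) :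
    (F.filter (fun A => 1 ∈ A)).card =
      (Icc 1 n).sup (fun i => (F.filter (fun A => i ∈ A)).card) :=
  shifted_max_degree_at_one_general n k hk hn F hshift
end

section
/- Arrange the elements of [2r+1] on a circle. For S ⊆ [2r+1] let u(S) be the weakly decreasing sequence of lengths of maximal cyclic runs of elements of S, and z(S) the analogous sequence for the complement. Let T = {S ⊆ [2r+1] : u(S) is lexicographically greater than z(S)}. Then T is an intersecting family. -/
/-!
If `S₁` and `S₂` were disjoint, then `S₂ ⊆ S₁ᶜ` and `S₁ ⊆ S₂ᶜ`. Enlarging a subset of the cycle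
can only increase its decreasingly sorted run-length sequence: every run of the smaller set lies
in a run of the larger one, and each run that does not survive unchanged is strictly shorter than
some run of the larger set that is new. This is the Dershowitz–Manna order on multisets, which
over a linear order implies the lexicographic order of the decreasing rearrangements. Hence
`u(S₂) ≤ z(S₁) < u(S₁) ≤ z(S₂) < u(S₂)`, which is absurd.
-/

open Finset

/-- The multiset of lengths of the maximal cyclic runs of `S` in the cycle `ZMod n`:
if `S` is everything there is a single run of length `n`; otherwise each run is
determined by its starting point `x` (an element of `S` with `x - 1 ∉ S`), and its
length is the number of `i < n` such that `x, x+1, …, x+i` all lie in `S`. -/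
def cycleRunLengths (n : ℕ) [NeZero n] (S : Finset (ZMod n)) : Multiset ℕ :=
  if S = Finset.univ then {n}
  else (S.filter fun x => x - 1 ∉ S).val.map
    (fun x => ((Finset.range n).filter fun i => ∀ j : ℕ, j ≤ i → x + (j : ZMod n) ∈ S).card)

/-- `u ≻ z`: the weakly decreasing rearrangement of `u` is lexicographically greater
than that of `z` (padding with zeros, which here corresponds to end-of-list). -/
def runLexGT (u z : Multiset ℕ) : Prop :=
  List.Lex (· < ·) (z.sort (· ≤ ·)).reverse (u.sort (· ≤ ·)).reverse

namespace Multiset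

variable {α : Type*} [LinearOrder α]

theorem reverse_sort_le_eq_sort_ge (M : Multiset α) : (M.sort (· ≤ ·)).reverse = M.sort (· ≥ ·) :=
  List.Perm.eq_of_pairwise' (r := (· ≥ ·)) (List.pairwise_reverse.mpr (M.pairwise_sort _))
    (M.pairwise_sort _) ((List.reverse_perm _).trans (by rw [← coe_eq_coe, sort_eq, sort_eq]))

theorem sort_ge_add_lt_sort_ge_cons {c : α} {N : Multiset α} (hN : ∀ a ∈ N, a < c)
    (M : Multiset α) : (M + N).sort (· ≥ ·) < (c ::ₘ M).sort (· ≥ ·) := by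
  induction M using strongInductionOn with
  | ih M IH =>
  by_cases hM : ∀ b ∈ M, b < c
  · rw [sort_cons _ _ _ fun b hb => (hM b hb).le]
    cases h : (M + N).sort (· ≥ ·) with
    | nil => exact List.Lex.nil
    | cons a l =>
      have ha : a ∈ M + N := by rw [← mem_sort (· ≥ ·), h]; exact List.mem_cons_self
      exact List.Lex.rel (by rcases mem_add.mp ha with ha | ha <;> [exact hM a ha; exact hN a ha])
  · obtain ⟨b, hbM, hcb⟩ := not_forall₂.mp hM
    obtain ⟨m, hmM, hmax⟩ := exists_max_image id (s := M) (by rintro rfl; exact notMem_zero b hbM)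
    obtain ⟨M, rfl⟩ := exists_cons_of_mem hmM
    have hcm : c ≤ m := (not_lt.mp hcb).trans (hmax b hbM)
    have hM : ∀ b ∈ M, b ≤ m := fun b hb => hmax b (mem_cons_of_mem hb)
    rw [cons_add, cons_swap, sort_cons _ _ _ fun b hb => ?_, sort_cons _ _ _ fun b hb => ?_]
    · exact List.Lex.cons (IH M (lt_cons_self M m))
    · rcases mem_cons.mp hb with rfl | hb <;> [exact hcm; exact hM b hb]
    · rcases mem_add.mp hb with hb | hb <;> [exact hM b hb; exact ((hN b hb).trans_le hcm).le]

theorem sort_ge_le_sort_ge_add (M K : Multiset α) :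
    M.sort (· ≥ ·) ≤ (M + K).sort (· ≥ ·) := by
  induction K using Multiset.induction with
  | empty => rw [add_zero]
  | cons a K IH =>
    have := sort_ge_add_lt_sort_ge_cons (c := a) (N := 0) (by simp) (M + K)
    rw [add_zero] at this
    rw [add_cons]
    exact IH.trans this.le

theorem IsDershowitzMannaLT.sort_ge_lt {M N : Multiset α} (h : IsDershowitzMannaLT M N) :
    M.sort (· ≥ ·) < N.sort (· ≥ ·) := by
  obtain ⟨X, Y, Z, hZ, rfl, rfl, hYZ⟩ := h
  obtain ⟨m, hmZ, hmax⟩ := exists_max_image id hZ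
  obtain ⟨Z, rfl⟩ := exists_cons_of_mem hmZ
  calc (X + Y).sort (· ≥ ·) < (m ::ₘ X).sort (· ≥ ·) :=
        sort_ge_add_lt_sort_ge_cons (fun y hy => ?_) X
    _ ≤ (X + m ::ₘ Z).sort (· ≥ ·) := by
        rw [add_cons, ← cons_add]; exact sort_ge_le_sort_ge_add _ _
  obtain ⟨z, hz, hyz⟩ := hYZ y hy
  exact hyz.trans_le (hmax z hz)

theorem eq_or_isDershowitzMannaLT_add {X Y Z : Multiset α} (h : ∀ y ∈ Y, ∃ z ∈ Z, y < z) :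
    X + Y = X + Z ∨ IsDershowitzMannaLT (X + Y) (X + Z) := by
  by_cases hZ : Z = 0
  · left
    rw [hZ, eq_zero_of_forall_notMem (s := Y) fun y hy => by simpa [hZ] using h y hy]
  · exact Or.inr ⟨X, Y, Z, hZ, rfl, rfl, h⟩

end Multiset

namespace Finset

variable {ι α : Type*} [LinearOrder α]

theorem map_val_eq_or_isDershowitzMannaLT {s t : Finset ι} {f g : ι → α}
    (h : ∀ i ∈ s, ¬(i ∈ t ∧ f i = g i) → ∃ j ∈ t, ¬(j ∈ s ∧ f j = g j) ∧ f i < g j) :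
    s.val.map f = t.val.map g ∨ Multiset.IsDershowitzMannaLT (s.val.map f) (t.val.map g) := by
  classical
  have hs := congrArg (Multiset.map f) (s.val.filter_add_not fun i => i ∈ t ∧ f i = g i)
  have ht := congrArg (Multiset.map g) (t.val.filter_add_not fun j => j ∈ s ∧ f j = g j)
  have hcommon : (s.val.filter fun i => i ∈ t ∧ f i = g i).map f =
      (t.val.filter fun j => j ∈ s ∧ f j = g j).map g := by
    have hst : s.filter (fun i => i ∈ t ∧ f i = g i) = t.filter fun j => j ∈ s ∧ f j = g j := by
      ext; simp only [mem_filter]; tauto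
    rw [← filter_val, ← filter_val, hst]
    exact Multiset.map_congr rfl fun j hj => (mem_filter.mp hj).2.2
  rw [Multiset.map_add, hcommon] at hs
  rw [Multiset.map_add] at ht
  rw [← hs, ← ht]
  apply Multiset.eq_or_isDershowitzMannaLT_add
  simp only [Multiset.mem_map, Multiset.mem_filter, forall_exists_index, and_imp]
  rintro _ i hi hi' rfl
  obtain ⟨j, hj, hj', hij⟩ := h i hi hi'
  exact ⟨g j, ⟨j, ⟨hj, hj'⟩, rfl⟩, hij⟩

end Finset

section CycleRuns

variable {n : ℕ} {S A B : Finset (ZMod n)} {x y z : ZMod n} {i t : ℕ}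

def runStarts (S : Finset (ZMod n)) : Finset (ZMod n) := S.filter fun x => x - 1 ∉ S

def runLength (S : Finset (ZMod n)) (x : ZMod n) : ℕ :=
  ((range n).filter fun i => ∀ j : ℕ, j ≤ i → x + (j : ZMod n) ∈ S).card

theorem mem_runStarts : x ∈ runStarts S ↔ x ∈ S ∧ x - 1 ∉ S := mem_filter

theorem cycleRunLengths_of_ne_univ [NeZero n] (hS : S ≠ univ) :
    cycleRunLengths n S = (runStarts S).val.map (runLength S) := if_neg hS

theorem lt_runLength_iff : i < runLength S x ↔ i < n ∧ ∀ j ≤ i, x + (j : ZMod n) ∈ S := by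
  set F := (range n).filter fun i => ∀ j : ℕ, j ≤ i → x + (j : ZMod n) ∈ S
  have hdown : ∀ {i k}, k ∈ F → i ≤ k → i ∈ F := by
    intro i k hk hik
    simp only [F, mem_filter, mem_range] at hk ⊢
    exact ⟨by omega, fun j hj => hk.2 j (hj.trans hik)⟩
  suffices i < F.card ↔ i ∈ F by simpa [runLength, F] using this
  constructor
  · intro hi
    by_contra hiF
    have : F ⊆ range i := fun k hk => mem_range.mpr (not_le.mp fun hik => hiF (hdown hk hik))
    simpa using hi.trans_le (card_le_card this)
  · intro hiF
    have : range (i + 1) ⊆ F := fun k hk => hdown hiF (Nat.lt_succ_iff.mp (mem_range.mp hk))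
    simpa using card_le_card this

theorem add_mem_of_lt_runLength (h : i < runLength S x) : x + (i : ZMod n) ∈ S :=
  (lt_runLength_iff.mp h).2 i le_rfl

theorem runLength_lt [NeZero n] (hS : S ≠ univ) (x : ZMod n) : runLength S x < n := by
  refine (card_filter_le _ _).trans_eq (card_range n) |>.lt_of_ne fun h => hS ?_
  have hchain := (lt_runLength_iff (i := n - 1) (S := S) (x := x)).mp
    (by rw [runLength, h]; exact Nat.sub_lt (NeZero.pos n) one_pos)
  refine eq_univ_of_forall fun y => ?_
  simpa using hchain.2 (y - x).val (Nat.le_sub_one_of_lt (ZMod.val_lt _))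

theorem add_runLength_notMem [NeZero n] (hS : S ≠ univ) (x : ZMod n) :
    x + (runLength S x : ZMod n) ∉ S := fun hx =>
  lt_irrefl _ <| lt_runLength_iff.mpr ⟨runLength_lt hS x, fun _ hj =>
    hj.eq_or_lt.elim (· ▸ hx) add_mem_of_lt_runLength⟩

theorem add_notMem_runStarts (ht0 : 0 < t) (ht : t < runLength S z) :
    z + (t : ZMod n) ∉ runStarts S := fun h => by
  obtain ⟨s, rfl⟩ := Nat.exists_eq_succ_of_ne_zero ht0.ne'
  refine (mem_runStarts.mp h).2 ?_
  convert add_mem_of_lt_runLength (Nat.lt_of_succ_lt ht) using 1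
  push_cast; ring

theorem exists_mem_runStarts_eq_add [NeZero n] (hS : S ≠ univ) (hy : y ∈ S) :
    ∃ z ∈ runStarts S, ∃ t < runLength S z, y = z + t := by
  classical
  obtain ⟨w, hw⟩ : ∃ w, w ∉ S := by simpa [eq_univ_iff_forall] using hS
  -- Walk back from `y` to the first element outside `S`; the run of `y` starts just after it.
  have hex : ∃ k : ℕ, y - (k : ZMod n) ∉ S := ⟨(y - w).val, by simpa using hw⟩
  obtain ⟨t, hkt⟩ := Nat.exists_eq_succ_of_ne_zero (n := Nat.find hex) fun h0 =>
    Nat.find_spec hex (by rwa [h0, Nat.cast_zero, sub_zero])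
  have hmem : ∀ j ≤ t, y - (j : ZMod n) ∈ S := fun j hj =>
    not_not.mp (Nat.find_min hex (by omega))
  refine ⟨y - t, mem_runStarts.mpr ⟨hmem t le_rfl, ?_⟩, t,
    lt_runLength_iff.mpr ⟨?_, fun j hj => ?_⟩, by ring⟩
  · convert Nat.find_spec hex using 2
    rw [hkt, Nat.cast_succ]; ring
  · have := Nat.find_min' hex (m := (y - w).val) (by simpa using hw)
    have := ZMod.val_lt (y - w)
    omega
  · convert hmem (t - j) (Nat.sub_le t j) using 1
    push_cast [Nat.cast_sub hj]; ring

theorem add_runLength_le_runLength [NeZero n] (hAB : A ⊆ B) (hB : B ≠ univ)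
    (ht : t ≤ runLength B z) : t + runLength A (z + t) ≤ runLength B z := by
  by_contra! h
  apply add_runLength_notMem hB z
  apply hAB
  convert add_mem_of_lt_runLength (S := A) (x := z + t) (i := runLength B z - t) (by omega)
    using 1
  push_cast [Nat.cast_sub ht]; ring

theorem exists_runStarts_lt_runLength [NeZero n] (hAB : A ⊆ B) (hB : B ≠ univ)
    (hy : y ∈ runStarts A) (hy' : ¬(y ∈ runStarts B ∧ runLength A y = runLength B y)) :
    ∃ z ∈ runStarts B, ¬(z ∈ runStarts A ∧ runLength A z = runLength B z) ∧
      runLength A y < runLength B z := by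
  obtain ⟨z, hz, t, ht, rfl⟩ := exists_mem_runStarts_eq_add hB (hAB (mem_runStarts.mp hy).1)
  have hle := add_runLength_le_runLength hAB hB ht.le
  rcases Nat.eq_zero_or_pos t with rfl | ht0
  · simp only [Nat.cast_zero, add_zero, zero_add] at hy hy' hle ⊢
    exact ⟨z, hz, fun h => hy' ⟨hz, h.2⟩, hle.lt_of_ne fun h => hy' ⟨hz, h⟩⟩
  · exact ⟨z, hz, fun ⟨_, hlen⟩ => add_notMem_runStarts ht0 (by omega) hy, by omega⟩

theorem cycleRunLengths_eq_or_isDershowitzMannaLT [NeZero n] (hAB : A ⊆ B) :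
    cycleRunLengths n A = cycleRunLengths n B ∨
      Multiset.IsDershowitzMannaLT (cycleRunLengths n A) (cycleRunLengths n B) := by
  by_cases hB : B = univ
  · by_cases hA : A = univ
    · exact Or.inl (by rw [hA, hB])
    · refine Or.inr ⟨0, cycleRunLengths n A, {n}, by simp, by simp, ?_, ?_⟩
      · rw [cycleRunLengths, if_pos hB, zero_add]
      · rw [cycleRunLengths_of_ne_univ hA]
        simpa using fun y _ => runLength_lt hA y
  · have hA : A ≠ univ := fun h => hB (univ_subset_iff.mp (h ▸ hAB))
    rw [cycleRunLengths_of_ne_univ hA, cycleRunLengths_of_ne_univ hB]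
    exact map_val_eq_or_isDershowitzMannaLT fun y hy hy' =>
      exists_runStarts_lt_runLength hAB hB hy hy'

end CycleRuns

theorem sort_ge_cycleRunLengths_le_of_subset {n : ℕ} [NeZero n] {A B : Finset (ZMod n)}
    (hAB : A ⊆ B) : (cycleRunLengths n A).sort (· ≥ ·) ≤ (cycleRunLengths n B).sort (· ≥ ·) := by
  rcases cycleRunLengths_eq_or_isDershowitzMannaLT hAB with h | h
  · rw [h]
  · exact h.sort_ge_lt.le

theorem runLexGT_iff (u z : Multiset ℕ) : runLexGT u z ↔ z.sort (· ≥ ·) < u.sort (· ≥ ·) := by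
  rw [runLexGT, Multiset.reverse_sort_le_eq_sort_ge, Multiset.reverse_sort_le_eq_sort_ge]
  rfl

/-- The family `T` of subsets `S` of the cycle `[2r+1]` whose run-length sequence is
lexicographically greater than that of the complement is intersecting. -/
theorem run_family_intersecting (r : ℕ) (S₁ S₂ : Finset (ZMod (2 * r + 1)))
    (h₁ : runLexGT (cycleRunLengths (2 * r + 1) S₁) (cycleRunLengths (2 * r + 1) S₁ᶜ))
    (h₂ : runLexGT (cycleRunLengths (2 * r + 1) S₂) (cycleRunLengths (2 * r + 1) S₂ᶜ)) :
    (S₁ ∩ S₂).Nonempty := by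
  rw [runLexGT_iff] at h₁ h₂
  rw [← not_disjoint_iff_nonempty_inter]
  intro hdisj
  have h₂₁ := sort_ge_cycleRunLengths_le_of_subset (subset_compl_iff_disjoint_left.mpr hdisj)
  have h₁₂ := sort_ge_cycleRunLengths_le_of_subset (subset_compl_iff_disjoint_right.mpr hdisj)
  exact lt_irrefl _ (((h₂₁.trans_lt h₁).trans_le h₁₂).trans h₂)
end

section
/- Let n > 2k > 0, F ⊆ {S ⊆ [n] : |S| = k} intersecting, with F_i, G, H₁, H₂ as defined (F_i = members meeting [3] exactly in {i}; G = traces on [4,n] of members meeting [3] exactly in {2,3}; H₁ = traces of F₁; H₂ = members disjoint from [3]). If |F₁| ≥ |F₂| and |F₁| ≥ |F₃|, then γ(F) ≤ |G| + 2|H₁| + |H₂|. -/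
/-!
Every member of `F` avoiding the element `1` either meets `[3]` in `{2, 3}`, `{2}` or `{3}`, or
misses `[3]` altogether. Hence `γ(F) ≤ |F| - δ₁(F) ≤ |G| + |F₂| + |F₃| + |H₂|`, and
`|F₂|, |F₃| ≤ |F₁| = |H₁|`. The traces are counted without loss because a member of `F` is
recovered from its traces on `[3]` and on `[4, n]`.
-/

open Finset

theorem card_sub_sup_le_card_filter_notMem {α : Type*} [DecidableEq α]
    (F : Finset (Finset α)) {U : Finset α} {i : α} (hi : i ∈ U) :
    F.card - U.sup (fun j => (F.filter (fun A => j ∈ A)).card) ≤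
      (F.filter (fun A => i ∉ A)).card := by
  have hdeg := le_sup (f := fun j => (F.filter (fun A => j ∈ A)).card) hi
  have hsplit := F.card_filter_add_card_filter_not (fun A => i ∈ A)
  omega

theorem injOn_inter_filter_inter_eq {α : Type*} [DecidableEq α] {F : Finset (Finset α)}
    {A B : Finset α} (hF : ∀ S ∈ F, S ⊆ A ∪ B) (T : Finset α) :
    Set.InjOn (fun S => S ∩ B) (F.filter (fun S => S ∩ A = T)) := by
  intro S hS S' hS' h
  simp only [coe_filter, Set.mem_ofPred_eq] at hS hS'
  rw [← inter_eq_left.2 (hF S hS.1), ← inter_eq_left.2 (hF S' hS'.1),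
    inter_union_distrib_left, inter_union_distrib_left, hS.2, hS'.2]
  exact congrArg (T ∪ ·) h

theorem card_image_inter_filter_inter_eq {α : Type*} [DecidableEq α] {F : Finset (Finset α)}
    {A B : Finset α} (hF : ∀ S ∈ F, S ⊆ A ∪ B) (T : Finset α) :
    ((F.filter (fun S => S ∩ A = T)).image (fun S => S ∩ B)).card =
      (F.filter (fun S => S ∩ A = T)).card :=
  card_image_of_injOn (injOn_inter_filter_inter_eq hF T)

theorem Icc_one_subset_union_Icc_four (n : ℕ) : Icc 1 n ⊆ {1, 2, 3} ∪ Icc 4 n := by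
  intro x hx
  simp only [mem_Icc, mem_union, mem_insert, mem_singleton] at hx ⊢
  omega

theorem filter_one_notMem_subset_union {n : ℕ} {F : Finset (Finset ℕ)}
    (hF : ∀ S ∈ F, S ⊆ Icc 1 n) :
    F.filter (fun S => 1 ∉ S) ⊆
      F.filter (fun S => S ∩ ({1, 2, 3} : Finset ℕ) = {2, 3}) ∪
        F.filter (fun S => S ∩ ({1, 2, 3} : Finset ℕ) = {2}) ∪
        F.filter (fun S => S ∩ ({1, 2, 3} : Finset ℕ) = {3}) ∪
        F.filter (fun S => S ⊆ Icc 4 n) := by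
  intro S hS
  obtain ⟨hSF, h1⟩ := mem_filter.1 hS
  have hSn := hF S hSF
  simp only [mem_union, mem_filter, hSF, true_and]
  by_cases h2 : 2 ∈ S <;> by_cases h3 : 3 ∈ S
  · grind
  · grind
  · grind
  · refine Or.inr fun x hx => ?_
    have := mem_Icc.1 (hSn hx)
    grind

theorem card_filter_one_notMem_le {n : ℕ} {F : Finset (Finset ℕ)}
    (hF : ∀ S ∈ F, S ⊆ Icc 1 n) :
    (F.filter (fun S => 1 ∉ S)).card ≤
      (F.filter (fun S => S ∩ ({1, 2, 3} : Finset ℕ) = {2, 3})).card +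
        (F.filter (fun S => S ∩ ({1, 2, 3} : Finset ℕ) = {2})).card +
        (F.filter (fun S => S ∩ ({1, 2, 3} : Finset ℕ) = {3})).card +
        (F.filter (fun S => S ⊆ Icc 4 n)).card := by
  grw [filter_one_notMem_subset_union hF, card_union_le, card_union_le, card_union_le]

theorem diversity_le_G_H1_H2_general (n k : ℕ) (hn : 2 * k < n)
    (F : Finset (Finset ℕ)) (hF : F ⊆ (Icc 1 n).powersetCard k)
    (h12 : (F.filter (fun S => S ∩ ({1, 2, 3} : Finset ℕ) = {2})).card ≤
      (F.filter (fun S => S ∩ ({1, 2, 3} : Finset ℕ) = {1})).card)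
    (h13 : (F.filter (fun S => S ∩ ({1, 2, 3} : Finset ℕ) = {3})).card ≤
      (F.filter (fun S => S ∩ ({1, 2, 3} : Finset ℕ) = {1})).card) :
    F.card - (Icc 1 n).sup (fun i => (F.filter (fun A => i ∈ A)).card) ≤
      ((F.filter (fun S => S ∩ ({1, 2, 3} : Finset ℕ) = {2, 3})).image
        (fun S => S ∩ Icc 4 n)).card
      + 2 * ((F.filter (fun S => S ∩ ({1, 2, 3} : Finset ℕ) = {1})).image
          (fun S => S ∩ Icc 4 n)).card
      + (F.filter (fun S => S ⊆ Icc 4 n)).card := by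
  have hsub : ∀ S ∈ F, S ⊆ Icc 1 n := fun S hS => (mem_powersetCard.1 (hF hS)).1
  have hsplit : ∀ S ∈ F, S ⊆ {1, 2, 3} ∪ Icc 4 n :=
    fun S hS => (hsub S hS).trans (Icc_one_subset_union_Icc_four n)
  have h1n : 1 ∈ Icc 1 n := mem_Icc.2 ⟨le_rfl, by omega⟩
  rw [card_image_inter_filter_inter_eq hsplit, card_image_inter_filter_inter_eq hsplit]
  have hγ := card_sub_sup_le_card_filter_notMem F h1n
  have hdecomp := card_filter_one_notMem_le hsub
  omega

/-- For an intersecting family `F` of `k`-subsets of `[n]` (`n > 2k > 0`), if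
`|F₁| ≥ |F₂|` and `|F₁| ≥ |F₃|`, then `γ(F) ≤ |G| + 2|H₁| + |H₂|`. -/
theorem diversity_le_G_H1_H2 (n k : ℕ) (hk : 0 < k) (hn : 2 * k < n)
    (F : Finset (Finset ℕ)) (hF : F ⊆ (Icc 1 n).powersetCard k)
    (hint : ∀ A ∈ F, ∀ B ∈ F, (A ∩ B).Nonempty)
    (h12 : (F.filter (fun S => S ∩ ({1, 2, 3} : Finset ℕ) = {2})).card ≤
      (F.filter (fun S => S ∩ ({1, 2, 3} : Finset ℕ) = {1})).card)
    (h13 : (F.filter (fun S => S ∩ ({1, 2, 3} : Finset ℕ) = {3})).card ≤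
      (F.filter (fun S => S ∩ ({1, 2, 3} : Finset ℕ) = {1})).card) :
    F.card - (Icc 1 n).sup (fun i => (F.filter (fun A => i ∈ A)).card) ≤
      ((F.filter (fun S => S ∩ ({1, 2, 3} : Finset ℕ) = {2, 3})).image
        (fun S => S ∩ Icc 4 n)).card
      + 2 * ((F.filter (fun S => S ∩ ({1, 2, 3} : Finset ℕ) = {1})).image
          (fun S => S ∩ Icc 4 n)).card
      + (F.filter (fun S => S ⊆ Icc 4 n)).card :=
  diversity_le_G_H1_H2_general n k hn F hF h12 h13
end
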